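/- Let Σ be a symmetric positive definite N×N matrix, and let H = (1-τ)I + τM where M is diagonalizable with eigenvalues in [0,1], τ ∈ [0,1), and η = ∑_{i=1}^N (1-λ_i). If the radius parameters satisfy r ≤ r', then Vol(B(r, c, HΣHᵀ)) ≤ e^{-τη} Vol(B(r', c', Σ)) for any centers c, c'. -/

import Mathlib

/-!
Writing `M = P diag(λ) P⁻¹` gives `H = P diag(1 - τ(1 - λᵢ)) P⁻¹`, so `det H = ∏ᵢ (1 - τ(1 - λᵢ))`,
and `1 - x ≤ e^{-x}` bounds this by `e^{-τη}`. The ellipsoid of `H Σ Hᵀ` is the image under `H` of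
the ellipsoid of `Σ` with the same radius, so its volume is `det H` times the latter; enlarging the
radius to `r'` and moving the centre to `c'` can only increase, resp. preserve, the volume.
-/

open Matrix MeasureTheory

/-- The Mahalanobis ellipsoid `{x : (x-c)ᵀ S⁻¹ (x-c) ≤ r}`. -/
def ellipsoid (N : ℕ) (r : ℝ) (c : Fin N → ℝ) (S : Matrix (Fin N) (Fin N) ℝ) :
    Set (Fin N → ℝ) :=
  {x | (x - c) ⬝ᵥ S⁻¹ *ᵥ (x - c) ≤ r}

theorem Matrix.mulVec_dotProduct_mulVec_mulVec {n R : Type*} [Fintype n] [CommSemiring R]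
    (Q B : Matrix n n R) (v : n → R) :
    (B *ᵥ v) ⬝ᵥ Q *ᵥ (B *ᵥ v) = v ⬝ᵥ (Bᵀ * Q * B) *ᵥ v := by
  rw [dotProduct_mulVec, dotProduct_mulVec, ← vecMul_transpose, vecMul_vecMul, vecMul_vecMul,
    dotProduct_mulVec, Matrix.mul_assoc]

theorem Matrix.det_smul_one_add_smul_conj_diagonal {n R : Type*} [Fintype n] [DecidableEq n]
    [CommRing R] {P : Matrix n n R} (hP : IsUnit P.det) (a b : R) (d : n → R) :
    (a • (1 : Matrix n n R) + b • (P * diagonal d * P⁻¹)).det = ∏ i, (a + b * d i) := by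
  have hconj : a • (1 : Matrix n n R) + b • (P * diagonal d * P⁻¹) =
      P * diagonal (fun i => a + b * d i) * P⁻¹ := by
    calc a • (1 : Matrix n n R) + b • (P * diagonal d * P⁻¹)
        = a • (P * P⁻¹) + b • (P * diagonal d * P⁻¹) := by rw [mul_nonsing_inv _ hP]
      _ = P * (a • 1 + b • diagonal d) * P⁻¹ := by
        simp only [Matrix.mul_add, Matrix.add_mul, Matrix.mul_smul, Matrix.smul_mul, Matrix.mul_one]
      _ = P * diagonal (fun i => a + b * d i) * P⁻¹ := by
        rw [smul_one_eq_diagonal, ← diagonal_smul, diagonal_add]; rfl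
  rw [hconj, det_conj ((isUnit_iff_isUnit_det P).mpr hP), det_diagonal]

theorem Real.prod_one_sub_le_exp_neg_sum {ι : Type*} (s : Finset ι) {x : ι → ℝ}
    (hx : ∀ i ∈ s, x i ≤ 1) : ∏ i ∈ s, (1 - x i) ≤ Real.exp (-∑ i ∈ s, x i) := by
  rw [← Finset.sum_neg_distrib, Real.exp_sum]
  exact Finset.prod_le_prod (fun i hi => sub_nonneg.2 (hx i hi))
    fun i _ => Real.one_sub_le_exp_neg _

section Ellipsoid
variable {N : ℕ}

theorem ellipsoid_mono {r r' : ℝ} (h : r ≤ r') (c : Fin N → ℝ) (S : Matrix (Fin N) (Fin N) ℝ) :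
    ellipsoid N r c S ⊆ ellipsoid N r' c S :=
  fun _ hx => le_trans hx h

theorem ellipsoid_eq_preimage_sub (r : ℝ) (c : Fin N → ℝ) (S : Matrix (Fin N) (Fin N) ℝ) :
    ellipsoid N r c S = (· - c) ⁻¹' ellipsoid N r 0 S := by
  ext x; simp [ellipsoid]

theorem volume_ellipsoid_eq_of_center (r : ℝ) (c c' : Fin N → ℝ) (S : Matrix (Fin N) (Fin N) ℝ) :
    volume (ellipsoid N r c S) = volume (ellipsoid N r c' S) := by
  simp only [ellipsoid_eq_preimage_sub r c, ellipsoid_eq_preimage_sub r c', sub_eq_add_neg,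
    measure_preimage_add_right]

theorem image_toLin'_ellipsoid_zero {A : Matrix (Fin N) (Fin N) ℝ} (hA : IsUnit A.det) (r : ℝ)
    (S : Matrix (Fin N) (Fin N) ℝ) :
    toLin' A '' ellipsoid N r 0 S = ellipsoid N r 0 (A * S * Aᵀ) := by
  rw [Set.image_eq_preimage_of_inverse (g := (A⁻¹ *ᵥ ·))]
  · ext x
    simp only [ellipsoid, Set.mem_preimage, Set.mem_ofPred_eq, sub_zero, Matrix.mul_inv_rev,
      transpose_nonsing_inv, mulVec_dotProduct_mulVec_mulVec, Matrix.mul_assoc]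
  · intro x; simp [mulVec_mulVec, nonsing_inv_mul _ hA]
  · intro x; simp [mulVec_mulVec, mul_nonsing_inv _ hA]

theorem volume_ellipsoid_mul_mul_transpose {A : Matrix (Fin N) (Fin N) ℝ} (hA : IsUnit A.det)
    (r : ℝ) (c : Fin N → ℝ) (S : Matrix (Fin N) (Fin N) ℝ) :
    volume (ellipsoid N r c (A * S * Aᵀ)) =
      ENNReal.ofReal |A.det| * volume (ellipsoid N r c S) := by
  rw [volume_ellipsoid_eq_of_center r c 0, volume_ellipsoid_eq_of_center r c 0,
    ← image_toLin'_ellipsoid_zero hA, Measure.addHaar_image_linearMap, LinearMap.det_toLin']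

end Ellipsoid

theorem volume_shrinkage_general
    (N : ℕ) (S M P : Matrix (Fin N) (Fin N) ℝ) (lam : Fin N → ℝ)
    (hP : IsUnit P.det)
    (hM : M = P * Matrix.diagonal lam * P⁻¹)
    (hlam : ∀ i, lam i ∈ Set.Icc (0 : ℝ) 1)
    (τ : ℝ) (hτ : τ ∈ Set.Ico (0 : ℝ) 1)
    (H : Matrix (Fin N) (Fin N) ℝ)
    (hH : H = (1 - τ) • (1 : Matrix (Fin N) (Fin N) ℝ) + τ • M)
    (η : ℝ) (hη : η = ∑ i, (1 - lam i))
    (r r' : ℝ) (hrr' : r ≤ r') (c c' : Fin N → ℝ) :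
    volume (ellipsoid N r c (H * S * Hᵀ)) ≤
      ENNReal.ofReal (Real.exp (-(τ * η))) * volume (ellipsoid N r' c' S) := by
  have hfactor : ∀ i, τ * (1 - lam i) < 1 := fun i => by
    obtain ⟨hlam0, hlam1⟩ := hlam i
    nlinarith [hτ.1, hτ.2]
  have hdet : H.det = ∏ i, (1 - τ * (1 - lam i)) := by
    rw [hH, hM, det_smul_one_add_smul_conj_diagonal hP]
    congr! 1 with i
    ring
  have hdet_pos : 0 < H.det := hdet ▸ Finset.prod_pos fun i _ => sub_pos.2 (hfactor i)
  have hdet_le : H.det ≤ Real.exp (-(τ * η)) := by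
    rw [hdet, hη, Finset.mul_sum]
    exact Real.prod_one_sub_le_exp_neg_sum _ fun i _ => (hfactor i).le
  calc volume (ellipsoid N r c (H * S * Hᵀ))
      = ENNReal.ofReal |H.det| * volume (ellipsoid N r c S) :=
        volume_ellipsoid_mul_mul_transpose hdet_pos.ne'.isUnit r c S
    _ ≤ ENNReal.ofReal (Real.exp (-(τ * η))) * volume (ellipsoid N r' c S) := by
        rw [abs_of_pos hdet_pos]
        gcongr
        exact ellipsoid_mono hrr' c S
    _ = ENNReal.ofReal (Real.exp (-(τ * η))) * volume (ellipsoid N r' c' S) := by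
        rw [volume_ellipsoid_eq_of_center r' c c']

theorem volume_shrinkage
    (N : ℕ) (S M P : Matrix (Fin N) (Fin N) ℝ) (lam : Fin N → ℝ)
    (hS : S.PosDef)
    (hP : IsUnit P.det)
    (hM : M = P * Matrix.diagonal lam * P⁻¹)
    (hlam : ∀ i, lam i ∈ Set.Icc (0 : ℝ) 1)
    (τ : ℝ) (hτ : τ ∈ Set.Ico (0 : ℝ) 1)
    (H : Matrix (Fin N) (Fin N) ℝ)
    (hH : H = (1 - τ) • (1 : Matrix (Fin N) (Fin N) ℝ) + τ • M)
    (η : ℝ) (hη : η = ∑ i, (1 - lam i))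
    (r r' : ℝ) (hr : 0 < r) (hrr' : r ≤ r') (c c' : Fin N → ℝ) :
    volume (ellipsoid N r c (H * S * Hᵀ)) ≤
      ENNReal.ofReal (Real.exp (-(τ * η))) * volume (ellipsoid N r' c' S) :=
  volume_shrinkage_general N S M P lam hP hM hlam τ hτ H hH η hη r r' hrr' c c'
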